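/- The CBC mode of operation is topologically mixing: for any pair of nonempty open sets U, V ⊆ X, there exists an integer n₀ ∈ ℕ such that for all n > n₀, G_g^{∘n}(U) ∩ V ≠ ∅. -/

import Mathlib

/-!
An open set contains a whole cylinder around each of its points: fixing the state `x` and the
first `t` blocks of the message forces `d` below `10⁻ᵗ`. Given `P ∈ U`, `Q ∈ V` and `n > t`, keep
the first `n - 1` blocks of `P`'s message, choose block `n - 1` so that the encryption lands on
`Q`'s state (possible since `E_k` is onto and `⊕` by a fixed block is a bijection), and append
`Q`'s message. The resulting point lies in `U` and is sent onto `Q` by `G_g^n`.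
-/

open scoped BigOperators

/-- N-bit blocks: Boolean vectors of length N. -/
abbrev Block (N : ℕ) := Fin N → Bool

/-- Infinite sequences of N-bit blocks. -/
abbrev Msg (N : ℕ) := ℕ → Block N

/-- The phase space X = B^N × S_N. -/
abbrev Phase (N : ℕ) := Block N × Msg N

/-- Hamming distance d_e on B^N. -/
noncomputable def dE {N : ℕ} (x y : Block N) : ℝ :=
  ∑ j : Fin N, if x j = y j then (0 : ℝ) else 1

/-- Distance d_m on message sequences. -/
noncomputable def dM {N : ℕ} (m m' : Msg N) : ℝ :=
  (9 / (N : ℝ)) * ∑' k : ℕ, (∑ i : Fin N, if m k i = m' k i then (0 : ℝ) else 1) / 10 ^ (k + 1)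

/-- The distance d on the phase space X. -/
noncomputable def dX {N : ℕ} (P Q : Phase N) : ℝ :=
  dE P.1 Q.1 + dM P.2 Q.2

/-- The shift on message sequences. -/
def shiftMsg {N : ℕ} (m : Msg N) : Msg N := fun k => m (k + 1)

/-- The dynamical system G_g(x, m) = (g(m^0, x), σ(m)). -/
def Gg {N : ℕ} (g : Block N → Block N → Block N) (P : Phase N) : Phase N :=
  (g (P.2 0) P.1, shiftMsg P.2)

/-- The CBC iterate function g(m, x) = E_k(x ⊕ m), with ⊕ the bitwise XOR. -/
def cbcG {N : ℕ} (Ek : Block N → Block N) (m x : Block N) : Block N :=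
  Ek (fun j => Bool.xor (x j) (m j))

/-- Open sets for the topology induced by the distance d on X. -/
def IsOpenX {N : ℕ} (U : Set (Phase N)) : Prop :=
  ∀ P ∈ U, ∃ ε : ℝ, 0 < ε ∧ ∀ Q : Phase N, dX P Q < ε → Q ∈ U

lemma tsum_le_geometric_of_eq_zero {f : ℕ → ℝ} {C r : ℝ} (hr₀ : 0 ≤ r) (hr₁ : r < 1)
    (hf₀ : ∀ k, 0 ≤ f k) (hfC : ∀ k, f k ≤ C * r ^ k) {t : ℕ} (hzero : ∀ k < t, f k = 0) :
    ∑' k, f k ≤ C * r ^ t / (1 - r) := by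
  have hgeom := summable_geometric_of_lt_one hr₀ hr₁
  have hf : Summable f := (hgeom.mul_left C).of_nonneg_of_le hf₀ hfC
  calc ∑' k, f k = ∑' k, f (k + t) := by
        rw [← hf.sum_add_tsum_nat_add t,
          Finset.sum_eq_zero fun k hk => hzero k (Finset.mem_range.mp hk), zero_add]
    _ ≤ ∑' k, C * r ^ t * r ^ k :=
        (hf.comp_injective (add_left_injective t)).tsum_le_tsum
          (fun k => (hfC (k + t)).trans_eq (by ring)) (hgeom.mul_left _)
    _ = C * r ^ t / (1 - r) := by
        rw [tsum_mul_left, tsum_geometric_of_lt_one hr₀ hr₁, div_eq_mul_inv]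

section Distance

variable {N : ℕ}

lemma dE_self (x : Block N) : dE x x = 0 := by
  simp [dE]

lemma dE_nonneg (x y : Block N) : 0 ≤ dE x y :=
  Finset.sum_nonneg fun _ _ => by split_ifs <;> norm_num

lemma dE_le_card (x y : Block N) : dE x y ≤ N :=
  calc dE x y ≤ ∑ _j : Fin N, (1 : ℝ) :=
        Finset.sum_le_sum fun _ _ => by split_ifs <;> norm_num
    _ = N := by simp

lemma dM_eq_tsum_dE (m m' : Msg N) :
    dM m m' = 9 / (N : ℝ) * ∑' k, dE (m k) (m' k) / 10 ^ (k + 1) :=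
  rfl

lemma dM_le_of_forall_lt_eq {m m' : Msg N} {t : ℕ} (h : ∀ k < t, m k = m' k) :
    dM m m' ≤ (1 / 10) ^ t := by
  have htail : ∑' k, dE (m k) (m' k) / 10 ^ (k + 1) ≤ N / 10 * (1 / 10) ^ t / (1 - 1 / 10) := by
    refine tsum_le_geometric_of_eq_zero (by norm_num) (by norm_num)
      (fun k => by have := dE_nonneg (m k) (m' k); positivity) (fun k => ?_)
      (fun k hk => by rw [h k hk, dE_self, zero_div])
    calc dE (m k) (m' k) / 10 ^ (k + 1) ≤ N / 10 ^ (k + 1) := by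
          gcongr; exact dE_le_card _ _
      _ = N / 10 * (1 / 10) ^ k := by rw [one_div, inv_pow]; ring
  calc dM m m' ≤ 9 / (N : ℝ) * (N / 10 * (1 / 10) ^ t / (1 - 1 / 10)) := by
        rw [dM_eq_tsum_dE]; gcongr
    _ = (N / N : ℝ) * (1 / 10) ^ t := by ring
    _ ≤ (1 / 10) ^ t := mul_le_of_le_one_left (by positivity) (div_self_le_one _)

lemma IsOpenX.exists_cylinder_subset {U : Set (Phase N)} (hU : IsOpenX U) {P : Phase N}
    (hP : P ∈ U) : ∃ t : ℕ, ∀ m : Msg N, (∀ k < t, P.2 k = m k) → (P.1, m) ∈ U := by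
  obtain ⟨ε, hε, hball⟩ := hU P hP
  obtain ⟨t, ht⟩ := exists_pow_lt_of_lt_one hε (by norm_num : (1 / 10 : ℝ) < 1)
  refine ⟨t, fun m hm => hball _ ?_⟩
  calc dX P (P.1, m) = dM P.2 m := by simp [dX, dE_self]
    _ ≤ (1 / 10) ^ t := dM_le_of_forall_lt_eq hm
    _ < ε := ht

end Distance

section Steering

variable {N : ℕ}

def Msg.cons (b : Block N) (m : Msg N) : Msg N
  | 0 => b
  | k + 1 => m k

lemma Gg_cons (g : Block N → Block N → Block N) (x b : Block N) (m : Msg N) :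
    Gg g (x, Msg.cons b m) = (g b x, m) :=
  rfl

lemma exists_msg_iterate_succ_eq {g : Block N → Block N → Block N}
    (hg : ∀ x, Function.Surjective fun b => g b x) :
    ∀ (n : ℕ) (P Q : Phase N),
      ∃ m : Msg N, (∀ k < n, P.2 k = m k) ∧ (Gg g)^[n + 1] (P.1, m) = Q
  | 0, P, Q => by
    obtain ⟨b, hb⟩ := hg P.1 Q.1
    exact ⟨Msg.cons b Q.2, nofun, by simp [Gg_cons, hb]⟩
  | n + 1, P, Q => by
    obtain ⟨m, hagree, hm⟩ := exists_msg_iterate_succ_eq hg n (Gg g P) Q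
    refine ⟨Msg.cons (P.2 0) m, fun k hk => ?_, ?_⟩
    · cases k with
      | zero => rfl
      | succ k => exact hagree k (by omega)
    · rw [Function.iterate_succ_apply, Gg_cons]
      exact hm

lemma cbcG_surjective_left {Ek : Block N → Block N} (hEk : Function.Surjective Ek)
    (x : Block N) : Function.Surjective fun b => cbcG Ek b x := by
  intro y
  obtain ⟨z, rfl⟩ := hEk y
  exact ⟨fun j => x j ^^ z j, by simp [cbcG]⟩

end Steering

theorem cbc_topologically_mixing_general
    {N : ℕ} (Ek : Block N → Block N) (hEk : Function.Bijective Ek) :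
    ∀ U V : Set (Phase N), IsOpenX U → IsOpenX V → U.Nonempty → V.Nonempty →
      ∃ n₀ : ℕ, ∀ n : ℕ, n > n₀ → ((Gg (cbcG Ek))^[n] '' U ∩ V).Nonempty := by
  intro U V hU _ ⟨P, hP⟩ ⟨Q, hQ⟩
  obtain ⟨t, hcyl⟩ := hU.exists_cylinder_subset hP
  refine ⟨t, fun n hn => ?_⟩
  obtain ⟨n, rfl⟩ := Nat.exists_eq_add_one_of_ne_zero (by omega : n ≠ 0)
  obtain ⟨m, hagree, hm⟩ :=
    exists_msg_iterate_succ_eq (cbcG_surjective_left hEk.surjective) n P Q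
  exact ⟨Q, ⟨(P.1, m), hcyl m fun k hk => hagree k (by omega), hm⟩, hQ⟩

/-- the CBC mode of operation is topologically mixing. -/
theorem cbc_topologically_mixing
    {N : ℕ} (hN : 1 ≤ N) (Ek : Block N → Block N) (hEk : Function.Bijective Ek) :
    ∀ U V : Set (Phase N), IsOpenX U → IsOpenX V → U.Nonempty → V.Nonempty →
      ∃ n₀ : ℕ, ∀ n : ℕ, n > n₀ → ((Gg (cbcG Ek))^[n] '' U ∩ V).Nonempty :=
  cbc_topologically_mixing_general Ek hEk
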